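/- arXiv:math/0509021 — 4 statements merged into one kernel-verified Lean document; each statement's English description precedes it below -/
import Mathlib

section
/- For c ∈ (0,1), with a(c) = (1−√c)² and b(c) = (1+√c)², the integral ∫_{a(c)}^{b(c)} (log x)/(2πx) · √((x−a(c))(b(c)−x)) dx equals (c−1)log(1−c) − c. -/
/-!
With `r = √c`, the substitution `x = 1 + r² - 2r cos θ` turns the log moment into
`(r²/π) ∫₀^{2π} log(1 + r² - 2r cos θ) sin² θ / (1 + r² - 2r cos θ) dθ`. On the unit circle
`z = e^{iθ}` we have `1 + r² - 2r cos θ = |1 - rz|²`, so the logarithm is `2 Re log(1 - rz)`, and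
the integrand becomes twice the imaginary part of a contour integrand with a double pole at `0`
and a simple pole at `r`, holomorphic elsewhere on a neighbourhood of the closed unit disc.
Cauchy's integral formulas for a function and its derivative evaluate that contour integral.
-/

open Real

open Complex Metric in
theorem circleIntegral_div_sub_center_sq_mul_sub {U : Set ℂ} (hU : IsOpen U) {c w : ℂ} {R : ℝ}
    (hcR : closedBall c R ⊆ U) {f : ℂ → ℂ} (hf : DifferentiableOn ℂ f U) (hw : w ∈ ball c R)
    (hwc : w ≠ c) :
    ∮ z in C(c, R), f z / ((z - c) ^ 2 * (z - w)) =
      2 * π * I * ((f w - f c) / (w - c) ^ 2 - deriv f c / (w - c)) := by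
  have hR : 0 ≤ R := dist_nonneg.trans hw.le
  have hc : c ∈ ball c R := mem_ball_self (dist_nonneg.trans_lt hw)
  have hsub : ∀ v ∈ ball c R, ∀ z ∈ sphere c R, z - v ≠ 0 := by
    rintro v hv z hz h
    rw [sub_eq_zero.mp h, mem_sphere] at hz
    exact (mem_ball.mp hv).ne hz
  have hint : ∀ v ∈ ball c R, ∀ (n : ℕ) (a : ℂ),
      CircleIntegrable (fun z => a * (((z - v) ^ n)⁻¹ * f z)) c R := fun v hv n a =>
    ContinuousOn.circleIntegrable hR <| continuousOn_const.mul <| .mul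
      (((continuousOn_id.sub continuousOn_const).pow n).inv₀ fun z hz =>
        pow_ne_zero _ (hsub v hv z hz))
      (hf.continuousOn.mono (sphere_subset_closedBall.trans hcR))
  have hpartial : Set.EqOn (fun z => f z / ((z - c) ^ 2 * (z - w)))
      (fun z => ((w - c) ^ 2)⁻¹ * (((z - w) ^ 1)⁻¹ * f z)
        - ((w - c) ^ 2)⁻¹ * (((z - c) ^ 1)⁻¹ * f z) - (w - c)⁻¹ * (((z - c) ^ 2)⁻¹ * f z))
      (sphere c R) := by
    intro z hz
    have := hsub c hc z hz
    have := hsub w hw z hz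
    have := sub_ne_zero.mpr hwc
    field_simp
    ring
  have hcauchy : ∀ v ∈ ball c R, ∮ z in C(c, R), ((z - v) ^ 1)⁻¹ * f z = 2 * π * I * f v := by
    intro v hv
    simpa using (hf.mono hcR).circleIntegral_sub_inv_smul hv
  have hcauchy_deriv : ∮ z in C(c, R), ((z - c) ^ 2)⁻¹ * f z = 2 * π * I * deriv f c := by
    rw [← two_pi_I_inv_smul_circleIntegral_sub_sq_inv_smul_of_differentiable hU hcR hf hc,
      smul_eq_mul, ← mul_assoc, mul_inv_cancel₀ two_pi_I_ne_zero, one_mul]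
    rfl
  rw [circleIntegral.integral_congr hR hpartial, circleIntegral.integral_sub,
    circleIntegral.integral_sub, circleIntegral.integral_const_mul,
    circleIntegral.integral_const_mul, circleIntegral.integral_const_mul,
    hcauchy w hw, hcauchy c hc, hcauchy_deriv]
  · ring
  · exact hint w hw 1 _
  · exact hint c hc 1 _
  · exact (hint w hw 1 _).sub (hint c hc 1 _)
  · exact hint c hc 2 _

theorem integral_zero_two_mul_eq_two_nsmul_of_symm {E : Type*} [NormedAddCommGroup E]
    [NormedSpace ℝ E] {f : ℝ → E} {a : ℝ} (hf : IntervalIntegrable f MeasureTheory.volume 0 a)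
    (hsymm : ∀ x, f (2 * a - x) = f x) :
    ∫ x in 0..2 * a, f x = 2 • ∫ x in 0..a, f x := by
  have h2a : 2 * a - a = a := by ring
  have hf' : IntervalIntegrable f MeasureTheory.volume a (2 * a) := by
    have h := hf.comp_sub_left (2 * a)
    simp only [hsymm, sub_zero, h2a] at h
    exact h.symm
  have hreflect : ∫ x in a..2 * a, f x = ∫ x in 0..a, f x := by
    have h := intervalIntegral.integral_comp_sub_left (a := a) (b := 2 * a) f (2 * a)
    simpa only [hsymm, sub_self, h2a] using h
  rw [← intervalIntegral.integral_add_adjacent_intervals hf hf', hreflect, two_nsmul]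

theorem one_add_sq_sub_two_mul_cos_pos {r : ℝ} (hr : |r| < 1) (θ : ℝ) :
    0 < 1 + r ^ 2 - 2 * r * cos θ := by
  have : r * cos θ ≤ |r| := (le_abs_self _).trans
    (by rw [abs_mul]; exact mul_le_of_le_one_right (abs_nonneg r) (abs_cos_le_one θ))
  nlinarith [sq_abs r, abs_nonneg r]

theorem one_add_sq_sub_two_mul_cos_ge {r : ℝ} (hr : 0 ≤ r) (θ : ℝ) :
    (1 - r) ^ 2 ≤ 1 + r ^ 2 - 2 * r * cos θ := by
  nlinarith [cos_le_one θ]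

/-- On the unit circle `z = e^{iθ}` one has `1 + r² - 2r cos θ = (1 - rz)(z - r)/z` and
`sin² θ = -(z² - 1)²/(4z²)`; this numerator makes `z i · mpNumerator r z / (z² (z - r))` equal to
`i log(1 - rz) sin² θ / (1 + r² - 2r cos θ)` there. -/
noncomputable def mpNumerator (r : ℝ) (z : ℂ) : ℂ :=
  -(z ^ 2 - 1) ^ 2 / (4 * (1 - r * z)) * Complex.log (1 - r * z)

theorem differentiableOn_mpNumerator (r : ℝ) :
    DifferentiableOn ℂ (mpNumerator r) {z | 0 < (1 - r * z).re} := fun z hz =>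
  have hz' : 1 - (r : ℂ) * z ≠ 0 := fun h => by
    simp only [Set.mem_ofPred_eq, h, Complex.zero_re, lt_self_iff_false] at hz
  (((by fun_prop : DifferentiableAt ℂ (fun z : ℂ => -(z ^ 2 - 1) ^ 2) z).div
    (by fun_prop : DifferentiableAt ℂ (fun z : ℂ => 4 * (1 - r * z)) z)
    (mul_ne_zero (by norm_num) hz')).mul
    ((by fun_prop : DifferentiableAt ℂ (fun z : ℂ => 1 - r * z) z).clog
      (.inl hz))).differentiableWithinAt

theorem closedBall_subset_re_one_sub_mul_pos {r : ℝ} (hr : |r| < 1) :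
    Metric.closedBall (0 : ℂ) 1 ⊆ {z | 0 < (1 - r * z).re} := by
  intro z hz
  rw [mem_closedBall_zero_iff] at hz
  have : r * z.re ≤ |r| * ‖z‖ :=
    (le_abs_self _).trans ((abs_mul r z.re).trans_le (by gcongr; exact Complex.abs_re_le_norm z))
  simp only [Set.mem_ofPred_eq, Complex.sub_re, Complex.one_re, Complex.re_ofReal_mul]
  nlinarith [abs_nonneg r, norm_nonneg z]

theorem mpNumerator_zero (r : ℝ) : mpNumerator r 0 = 0 := by
  simp [mpNumerator]

theorem deriv_mpNumerator_zero (r : ℝ) : deriv (mpNumerator r) 0 = r / 4 := by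
  have hlog : HasDerivAt (fun z : ℂ => Complex.log (1 - r * z)) (-r) 0 := by
    simpa using ((hasDerivAt_id (0 : ℂ)).const_mul (r : ℂ)).const_sub 1 |>.clog (by simp)
  have hfac : DifferentiableAt ℂ (fun z : ℂ => -(z ^ 2 - 1) ^ 2 / (4 * (1 - r * z))) 0 :=
    (by fun_prop : DifferentiableAt ℂ (fun z : ℂ => -(z ^ 2 - 1) ^ 2) 0).div (by fun_prop) (by simp)
  unfold mpNumerator
  rw [(hfac.hasDerivAt.fun_mul hlog).deriv]
  norm_num [div_eq_inv_mul]

theorem mpNumerator_ofReal_self {r : ℝ} (hr : r ^ 2 < 1) :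
    mpNumerator r r = ((-((1 - r ^ 2) * Real.log (1 - r ^ 2)) / 4 : ℝ) : ℂ) := by
  have h : 0 < 1 - r ^ 2 := by linarith
  have h' : (1 : ℂ) - r ^ 2 ≠ 0 := by exact_mod_cast h.ne'
  rw [mpNumerator, show (1 : ℂ) - r * r = ((1 - r ^ 2 : ℝ) : ℂ) by push_cast; ring,
    ← Complex.ofReal_log h.le]
  push_cast
  field_simp
  ring

theorem log_mul_sin_sq_div_eq_two_mul_im (r θ : ℝ) (hx : 1 + r ^ 2 - 2 * r * cos θ ≠ 0) :
    log (1 + r ^ 2 - 2 * r * cos θ) * sin θ ^ 2 / (1 + r ^ 2 - 2 * r * cos θ) =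
      2 * (deriv (circleMap 0 1) θ •
        (mpNumerator r (circleMap 0 1 θ) / (circleMap 0 1 θ ^ 2 * (circleMap 0 1 θ - r)))).im := by
  have hz : circleMap 0 1 θ = cos θ + sin θ * Complex.I := by
    simp [circleMap, Complex.exp_mul_I, ← Complex.ofReal_cos, ← Complex.ofReal_sin]
  have hpyth := sin_sq_add_cos_sq θ
  have hz0 : circleMap 0 1 θ ≠ 0 := circleMap_ne_center one_ne_zero
  rw [deriv_circleMap, smul_eq_mul]
  generalize circleMap 0 1 θ = z at hz hz0 ⊢
  generalize cos θ = cs at hx hz hpyth ⊢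
  generalize sin θ = sn at hz hpyth ⊢
  have hpythC : (sn : ℂ) ^ 2 + (cs : ℂ) ^ 2 = 1 := by exact_mod_cast hpyth
  have hfactor : ((1 + r ^ 2 - 2 * r * cs : ℝ) : ℂ) * z = (1 - r * z) * (z - r) := by
    rw [hz]; push_cast
    linear_combination (r * (sn : ℂ) ^ 2) * Complex.I_sq - r * hpythC
  have hsq : (z ^ 2 - 1) ^ 2 = -4 * (sn : ℂ) ^ 2 * z ^ 2 := by
    have : z ^ 2 - 1 = 2 * sn * Complex.I * z := by
      rw [hz]; linear_combination (-(sn : ℂ) ^ 2) * Complex.I_sq + hpythC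
    rw [this]; linear_combination (4 * (sn : ℂ) ^ 2 * z ^ 2) * Complex.I_sq
  have hnorm : ‖1 - r * z‖ ^ 2 = 1 + r ^ 2 - 2 * r * cs := by
    rw [Complex.sq_norm, Complex.normSq_apply, hz]
    simp
    linear_combination r ^ 2 * hpyth
  have hxC : ((1 + r ^ 2 - 2 * r * cs : ℝ) : ℂ) ≠ 0 := by exact_mod_cast hx
  obtain ⟨h1, h2⟩ : 1 - (r : ℂ) * z ≠ 0 ∧ z - r ≠ 0 :=
    mul_ne_zero_iff.mp (hfactor ▸ mul_ne_zero hxC hz0)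
  have hintegrand : z * Complex.I * (mpNumerator r z / (z ^ 2 * (z - r))) =
      ((sn ^ 2 / (1 + r ^ 2 - 2 * r * cs) : ℝ) : ℂ) * (Complex.log (1 - r * z) * Complex.I) := by
    rw [mpNumerator, hsq, Complex.ofReal_div, Complex.ofReal_pow]
    generalize ((1 + r ^ 2 - 2 * r * cs : ℝ) : ℂ) = X at hfactor hxC ⊢
    have h1' : 1 - z * r ≠ 0 := by rwa [mul_comm]
    field_simp
    linear_combination (sn ^ 2 * Complex.log (1 - z * r)) * hfactor
  have hlog : (Complex.log (1 - r * z)).re = log (1 + r ^ 2 - 2 * r * cs) / 2 := by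
    rw [Complex.log_re, ← hnorm, Real.log_pow]
    ring
  rw [hintegrand, Complex.im_ofReal_mul, Complex.mul_I_im, hlog]
  ring

open Metric in
theorem integral_zero_two_pi_log_mul_sin_sq_div {r : ℝ} (hr0 : r ≠ 0) (hr1 : |r| < 1) :
    ∫ θ in 0..2 * π, log (1 + r ^ 2 - 2 * r * cos θ) * sin θ ^ 2 / (1 + r ^ 2 - 2 * r * cos θ) =
      -π - π * (1 - r ^ 2) * log (1 - r ^ 2) / r ^ 2 := by
  have hU : IsOpen {z : ℂ | 0 < (1 - r * z).re} := isOpen_lt continuous_const (by fun_prop)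
  have hrball : (r : ℂ) ∈ ball 0 1 := by simpa using hr1
  have hcauchy := circleIntegral_div_sub_center_sq_mul_sub hU
    (closedBall_subset_re_one_sub_mul_pos hr1) (differentiableOn_mpNumerator r) hrball
    (by exact_mod_cast hr0)
  simp only [sub_zero] at hcauchy
  have hint : CircleIntegrable (fun z => mpNumerator r z / (z ^ 2 * (z - r))) 0 1 := by
    refine ContinuousOn.circleIntegrable zero_le_one
      (((differentiableOn_mpNumerator r).continuousOn.mono
        (sphere_subset_closedBall.trans (closedBall_subset_re_one_sub_mul_pos hr1))).div
      (by fun_prop) fun z hz => mul_ne_zero (pow_ne_zero 2 ?_) (sub_ne_zero.mpr ?_))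
    · rintro rfl; simp at hz
    · rintro rfl; exact hr1.ne (by simpa using hz)
  calc _ = ∫ θ in 0..2 * π, 2 * (deriv (circleMap 0 1) θ •
        (mpNumerator r (circleMap 0 1 θ) / (circleMap 0 1 θ ^ 2 * (circleMap 0 1 θ - r)))).im :=
        intervalIntegral.integral_congr fun θ _ =>
          log_mul_sin_sq_div_eq_two_mul_im r θ (one_add_sq_sub_two_mul_cos_pos hr1 θ).ne'
    _ = 2 * (∮ z in C(0, 1), mpNumerator r z / (z ^ 2 * (z - r))).im := by
        rw [intervalIntegral.integral_const_mul]
        exact congrArg _ (intervalIntegral.intervalIntegral_im hint.out)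
    _ = _ := by
        rw [hcauchy, mpNumerator_zero, deriv_mpNumerator_zero,
          mpNumerator_ofReal_self ((sq_lt_one_iff_abs_lt_one r).mpr hr1)]
        have hr0' : (r : ℂ) ≠ 0 := by exact_mod_cast hr0
        rw [show ∀ a : ℝ, 2 * (π : ℂ) * Complex.I * ((a - 0) / r ^ 2 - r / 4 / r) =
            ((2 * π * (a / r ^ 2 - 1 / 4) : ℝ) : ℂ) * Complex.I by
              intro a; push_cast; field_simp; ring,
          Complex.mul_I_im, Complex.ofReal_re]
        field_simp
        ring

theorem integral_zero_pi_log_mul_sin_sq_div {r : ℝ} (hr0 : r ≠ 0) (hr1 : |r| < 1) :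
    ∫ θ in 0..π, log (1 + r ^ 2 - 2 * r * cos θ) * sin θ ^ 2 / (1 + r ^ 2 - 2 * r * cos θ) =
      -π / 2 - π * (1 - r ^ 2) * log (1 - r ^ 2) / (2 * r ^ 2) := by
  have hpos := one_add_sq_sub_two_mul_cos_pos hr1
  have hcont : Continuous fun θ =>
      log (1 + r ^ 2 - 2 * r * cos θ) * sin θ ^ 2 / (1 + r ^ 2 - 2 * r * cos θ) := by
    fun_prop (disch := exact fun θ => (hpos θ).ne')
  have hdouble := integral_zero_two_mul_eq_two_nsmul_of_symm (hcont.intervalIntegrable 0 π)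
    fun θ => by simp only [cos_two_pi_sub, sin_two_pi_sub, neg_sq]
  rw [integral_zero_two_pi_log_mul_sin_sq_div hr0 hr1, two_nsmul] at hdouble
  linear_combination -hdouble / 2

theorem integral_log_div_mul_sqrt_eq_integral_log_mul_sin_sq_div {r : ℝ} (hr0 : 0 ≤ r)
    (hr1 : r ≠ 1) :
    ∫ x in (1 - r) ^ 2..(1 + r) ^ 2,
        log x / (2 * π * x) * √((x - (1 - r) ^ 2) * ((1 + r) ^ 2 - x)) =
      2 * r ^ 2 / π *
        ∫ θ in 0..π, log (1 + r ^ 2 - 2 * r * cos θ) * sin θ ^ 2 / (1 + r ^ 2 - 2 * r * cos θ) := by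
  set f : ℝ → ℝ := fun θ => 1 + r ^ 2 - 2 * r * cos θ with hf
  have hfpos : ∀ θ, 0 < f θ := fun θ => by
    have := sub_ne_zero.mpr hr1.symm
    exact lt_of_lt_of_le (by positivity) (one_add_sq_sub_two_mul_cos_ge hr0 θ)
  set G : ℝ → ℝ := fun x => log x / (2 * π * x) * √((x - (1 - r) ^ 2) * ((1 + r) ^ 2 - x))
  have hG : ContinuousOn G (Set.Ioi 0) :=
    .mul (.div (continuousOn_log.mono fun x hx => ne_of_gt hx) (by fun_prop)
      fun x hx => by simp only [Set.mem_Ioi] at hx; positivity) (by fun_prop)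
  have hderiv : ∀ θ, HasDerivAt f (2 * r * sin θ) θ := fun θ => by
    simpa using ((hasDerivAt_cos θ).const_mul (2 * r)).const_sub (1 + r ^ 2)
  have hsubst := intervalIntegral.integral_comp_mul_deriv'' (a := 0) (b := π) (g := G)
    (by fun_prop) (fun θ _ => (hderiv θ).hasDerivWithinAt) (by fun_prop)
    (hG.mono (Set.image_subset_iff.mpr fun θ _ => hfpos θ))
  have hsqrt : ∀ θ ∈ Set.uIcc 0 π,
      √((f θ - (1 - r) ^ 2) * ((1 + r) ^ 2 - f θ)) = 2 * r * sin θ := by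
    intro θ hθ
    rw [Set.uIcc_of_le pi_pos.le] at hθ
    have := sin_nonneg_of_nonneg_of_le_pi hθ.1 hθ.2
    rw [← sqrt_sq (by positivity : 0 ≤ 2 * r * sin θ)]
    congr 1
    linear_combination (-4 * r ^ 2) * sin_sq_add_cos_sq θ
  have hf0 : f 0 = (1 - r) ^ 2 := by simp only [hf, cos_zero]; ring
  have hfπ : f π = (1 + r) ^ 2 := by simp only [hf, cos_pi]; ring
  rw [← hf0, ← hfπ, ← hsubst, ← intervalIntegral.integral_const_mul]
  refine intervalIntegral.integral_congr fun θ hθ => ?_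
  show G (f θ) * (2 * r * sin θ) = 2 * r ^ 2 / π * (log (f θ) * sin θ ^ 2 / f θ)
  have := (hfpos θ).ne'
  simp only [G, hsqrt θ hθ]
  field_simp

/-- The logarithmic moment of the Marčenko–Pastur distribution: for `c ∈ (0,1)`,
with `a(c) = (1−√c)²` and `b(c) = (1+√c)²`,
`∫_{a(c)}^{b(c)} (log x)/(2πx) √((x−a(c))(b(c)−x)) dx = (c−1) log(1−c) − c`. -/
theorem marcenkoPastur_log_moment (c : ℝ) (hc : c ∈ Set.Ioo (0:ℝ) 1) :
    ∫ x in ((1 - Real.sqrt c) ^ 2)..((1 + Real.sqrt c) ^ 2),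
        log x / (2 * π * x) *
          Real.sqrt ((x - (1 - Real.sqrt c) ^ 2) * ((1 + Real.sqrt c) ^ 2 - x))
      = (c - 1) * log (1 - c) - c := by
  obtain ⟨hc0, hc1⟩ := hc
  have hr0 : 0 < √c := sqrt_pos.mpr hc0
  have hr1 : √c < 1 := (sqrt_lt' one_pos).mpr (by simpa using hc1)
  rw [integral_log_div_mul_sqrt_eq_integral_log_mul_sin_sq_div hr0.le hr1.ne,
    integral_zero_pi_log_mul_sin_sq_div hr0.ne' (by rwa [abs_of_pos hr0]), sq_sqrt hc0.le]
  field_simp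
  ring
end

section
/- For every integer k ≥ 2, ∑_{i=1}^{k−1} Ψ(i/2) = ((k−2)/2)Ψ(k/2) − k + ((k−1)/2)Ψ((k+1)/2) + (2 − γ − 2 log 2)/2, where γ is the Euler–Mascheroni constant. -/
/-!
The recurrence `Ψ(x + 1) = Ψ(x) + 1/x`, applied at `x = k/2`, shows that the right-hand side
grows by exactly `Ψ(k/2)` when `k` is replaced by `k + 1`, as does the left-hand side; so the
identity follows by induction from `k = 2`, where it reduces to `Ψ(3/2) = Ψ(1/2) + 2` and
`Ψ(1/2) = -γ - 2 log 2`.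
-/

open Real Finset

/-- The digamma function `Ψ = Γ'/Γ`, as the derivative of `log ∘ Γ`. -/
noncomputable def digamma (x : ℝ) : ℝ := deriv (fun y => log (Gamma y)) x

open scoped Topology

theorem ne_neg_natCast_of_pos {x : ℝ} (hx : 0 < x) (m : ℕ) : x ≠ -m := by
  have : (0 : ℝ) ≤ m := m.cast_nonneg
  linarith

theorem add_one_ne_neg_natCast {x : ℝ} (hx : ∀ m : ℕ, x ≠ -m) (m : ℕ) : x + 1 ≠ -m :=
  fun h => hx (m + 1) (by push_cast; linarith)

theorem digamma_eq_logDeriv_Gamma {x : ℝ} (hx : ∀ m : ℕ, x ≠ -m) :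
    digamma x = logDeriv Gamma x :=
  deriv_log_comp_eq_logDeriv (differentiableAt_Gamma hx) (Gamma_ne_zero hx)

theorem logDeriv_Gamma_add_one {x : ℝ} (hx : ∀ m : ℕ, x ≠ -m) :
    logDeriv Gamma (x + 1) = logDeriv Gamma x + x⁻¹ := by
  have hx0 : x ≠ 0 := by simpa using hx 0
  have hshift : (fun y => Gamma (y + 1)) =ᶠ[𝓝 x] fun y => y * Gamma y :=
    (eventually_ne_nhds hx0).mono fun y hy => Gamma_add_one hy
  calc logDeriv Gamma (x + 1) = logDeriv (Gamma ∘ fun y => y + 1) x := by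
        rw [logDeriv_comp (g := fun y => y + 1) (differentiableAt_Gamma (add_one_ne_neg_natCast hx))
          (by fun_prop), deriv_add_const, deriv_id'', mul_one]
    _ = logDeriv (fun y => y * Gamma y) x := (logDeriv_congr_nhds hshift).self_of_nhds
    _ = logDeriv Gamma x + x⁻¹ := by
        have := logDeriv_mul (f := id) x hx0 (Gamma_ne_zero hx) differentiableAt_id
          (differentiableAt_Gamma hx)
        rwa [logDeriv_id, add_comm, one_div] at this

theorem digamma_add_one {x : ℝ} (hx : ∀ m : ℕ, x ≠ -m) :
    digamma (x + 1) = digamma x + x⁻¹ := by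
  rw [digamma_eq_logDeriv_Gamma hx, digamma_eq_logDeriv_Gamma (add_one_ne_neg_natCast hx),
    logDeriv_Gamma_add_one hx]

theorem digamma_one_half : digamma (1 / 2) = -eulerMascheroniConstant - 2 * log 2 := by
  rw [digamma_eq_logDeriv_Gamma (ne_neg_natCast_of_pos one_half_pos), logDeriv_apply,
    hasDerivAt_Gamma_one_half.deriv, Gamma_one_half_eq]
  have : 0 < √π := sqrt_pos.mpr pi_pos
  field_simp
  ring

theorem digamma_half_add_one {n : ℕ} (hn : 0 < n) :
    digamma ((n + 2) / 2) = digamma (n / 2) + 2 / n := by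
  have hpos : (0 : ℝ) < n / 2 := by positivity
  rw [show ((n : ℝ) + 2) / 2 = n / 2 + 1 by ring, digamma_add_one (ne_neg_natCast_of_pos hpos),
    inv_div]

/-- For `k ≥ 2`,
`∑_{i=1}^{k−1} Ψ(i/2) = ((k−2)/2)Ψ(k/2) − k + ((k−1)/2)Ψ((k+1)/2) + (2 − γ − 2 log 2)/2`. -/
theorem sum_digamma_halves (k : ℕ) (hk : 2 ≤ k) :
    ∑ i ∈ Finset.Icc 1 (k - 1), digamma (i / 2)
      = ((k : ℝ) - 2) / 2 * digamma (k / 2) - k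
        + ((k : ℝ) - 1) / 2 * digamma ((k + 1) / 2)
        + (2 - Real.eulerMascheroniConstant - 2 * log 2) / 2 := by
  induction k, hk using Nat.le_induction with
  | base =>
    have h := digamma_add_one (ne_neg_natCast_of_pos (one_half_pos (α := ℝ)))
    norm_num at h ⊢
    rw [h, digamma_one_half]
    ring
  | succ k hk ih =>
    have hsum : ∑ i ∈ Icc 1 (k + 1 - 1), digamma (i / 2)
        = ∑ i ∈ Icc 1 (k - 1), digamma (i / 2) + digamma (k / 2) := by
      rw [Nat.add_sub_cancel, ← Nat.sub_add_cancel (by omega : 1 ≤ k),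
        sum_Icc_succ_top (by omega), Nat.sub_add_cancel (by omega : 1 ≤ k)]
    have hk0 : (0 : ℝ) < k := by positivity
    rw [hsum, ih]
    push_cast
    rw [add_assoc (k : ℝ) 1 1, one_add_one_eq_two, digamma_half_add_one (by omega)]
    field_simp
    ring
end

section
/- The function f(s) = (1/2 − 1/s + 1/(eˢ−1))/s, extended by f(0) = 1/12, satisfies 0 < f(s) ≤ 1/12 and 0 < s f(s) + 1/2 < 1 for all s ≥ 0. -/
/-!
For `s > 0`, `s f(s) = ((s - 2) eˢ + s + 2) / (2 s (eˢ - 1))`. The numerator vanishes at `0` and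
its derivative `(s - 1) eˢ + 1` is positive because `e⁻ˢ > 1 - s`, so `f > 0`. The bound
`f ≤ 1/12` is the Padé lower bound `eˢ ≥ (s² + 6s + 12) / (s² - 6s + 12)`, which already follows
from the Taylor polynomial of degree 6. Finally `s f(s) < 1/2` amounts to `eˢ - 1 > s`.
-/

open Real

/-- The Binet function `f(s) = (1/2 − 1/s + 1/(eˢ−1))/s` for `s > 0`,
extended continuously by `f(0) = 1/12`. -/
noncomputable def binetF (s : ℝ) : ℝ :=
  if s = 0 then 1 / 12 else (1 / 2 - 1 / s + 1 / (exp s - 1)) / s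

lemma one_sub_mul_exp_lt_one {x : ℝ} (hx : x ≠ 0) : (1 - x) * exp x < 1 := by
  have h := add_one_lt_exp (neg_ne_zero.2 hx)
  calc (1 - x) * exp x < exp (-x) * exp x := by rw [← neg_add_eq_sub]; gcongr
    _ = 1 := by rw [← exp_add, neg_add_cancel, exp_zero]

lemma two_sub_mul_exp_lt_two_add {x : ℝ} (hx : 0 < x) : (2 - x) * exp x < 2 + x := by
  let g : ℝ → ℝ := fun y ↦ (y - 2) * exp y + y + 2
  have hg : StrictMonoOn g (Set.Ici 0) := by
    refine strictMonoOn_of_hasDerivWithinAt_pos (f' := fun y ↦ (y - 1) * exp y + 1)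
      (convex_Ici 0) (by fun_prop) (fun y _ ↦ ?_) (fun y hy ↦ ?_)
    · refine HasDerivAt.hasDerivWithinAt ?_
      refine ((((hasDerivAt_id y).sub_const 2).mul (hasDerivAt_exp y)).add
        (hasDerivAt_id y)).add_const 2 |>.congr_deriv ?_
      simp only [id_eq]
      ring
    · rw [interior_Ici] at hy
      linarith [one_sub_mul_exp_lt_one hy.ne']
  have := hg Set.self_mem_Ici hx.le hx
  simp only [g, exp_zero] at this
  linarith

lemma sq_add_six_mul_add_twelve_le_mul_exp {x : ℝ} (hx : 0 ≤ x) :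
    x ^ 2 + 6 * x + 12 ≤ (x ^ 2 - 6 * x + 12) * exp x := by
  have htaylor := sum_le_exp_of_nonneg hx 7
  norm_num [Finset.sum_range_succ, Nat.factorial] at htaylor
  calc x ^ 2 + 6 * x + 12
      ≤ x ^ 2 + 6 * x + 12 + (x ^ 5 / 60 + x ^ 6 / 120 + x ^ 8 / 720) :=
        le_add_of_nonneg_right (by positivity)
    _ = (x ^ 2 - 6 * x + 12) *
          (1 + x + x ^ 2 / 2 + x ^ 3 / 6 + x ^ 4 / 24 + x ^ 5 / 120 + x ^ 6 / 720) := by ring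
    _ ≤ (x ^ 2 - 6 * x + 12) * exp x := by
        gcongr
        nlinarith [sq_nonneg (x - 3)]

lemma mul_binetF {s : ℝ} (hs : s ≠ 0) : s * binetF s = 1 / 2 - 1 / s + 1 / (exp s - 1) := by
  rw [binetF, if_neg hs]
  field_simp

lemma binetF_eq {s : ℝ} (hs : s ≠ 0) :
    binetF s = ((s - 2) * exp s + s + 2) / (2 * s ^ 2 * (exp s - 1)) := by
  have hexp : exp s - 1 ≠ 0 := sub_ne_zero.2 (exp_eq_one_iff s |>.not.2 hs)
  rw [binetF, if_neg hs]
  field_simp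
  ring

lemma binetF_pos {s : ℝ} (hs : 0 ≤ s) : 0 < binetF s := by
  rcases hs.eq_or_lt with rfl | hs
  · norm_num [binetF]
  have hexp : 0 < exp s - 1 := by linarith [add_one_lt_exp hs.ne']
  have hnum : 0 < (s - 2) * exp s + s + 2 := by linarith [two_sub_mul_exp_lt_two_add hs]
  rw [binetF_eq hs.ne']
  positivity

lemma binetF_le {s : ℝ} (hs : 0 ≤ s) : binetF s ≤ 1 / 12 := by
  rcases hs.eq_or_lt with rfl | hs
  · norm_num [binetF]
  have hexp : 0 < exp s - 1 := by linarith [add_one_lt_exp hs.ne']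
  rw [binetF_eq hs.ne', div_le_div_iff₀ (by positivity) (by norm_num)]
  linarith [sq_add_six_mul_add_twelve_le_mul_exp hs.le]

lemma mul_binetF_lt_half {s : ℝ} (hs : 0 ≤ s) : s * binetF s < 1 / 2 := by
  rcases hs.eq_or_lt with rfl | hs
  · norm_num
  have hrecip : 1 / (exp s - 1) < 1 / s :=
    one_div_lt_one_div_of_lt hs (by linarith [add_one_lt_exp hs.ne'])
  rw [mul_binetF hs.ne']
  linarith

/-- For all `s ≥ 0`, `0 < f(s) ≤ 1/12` and `0 < s f(s) + 1/2 < 1`. -/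
theorem binetF_bounds (s : ℝ) (hs : 0 ≤ s) :
    (0 < binetF s ∧ binetF s ≤ 1 / 12) ∧
      (0 < s * binetF s + 1 / 2 ∧ s * binetF s + 1 / 2 < 1) := by
  have hpos := binetF_pos hs
  have hmul := mul_binetF_lt_half hs
  refine ⟨⟨hpos, binetF_le hs⟩, ?_, by linarith⟩
  linarith [mul_nonneg hs hpos.le]
end

section
/- For s > 0, the function f(s) = (1/2 − 1/s + 1/(eˢ−1))/s admits the expansion f(s) = 2 ∑_{k=1}^∞ 1/(s² + 4π²k²). -/
open Real

/-!
Parseval's identity for `x ↦ e^{sx}` on `(0, 1]`: its Fourier coefficients are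
`(e^s - 1) / (s - 2πin)` and its squared `L²` norm is `(e^{2s} - 1) / (2s)`, so
`∑_{n ∈ ℤ} 1 / (s² + 4π²n²) = (e^s + 1) / (2s (e^s - 1))`.
Splitting off the term `n = 0` and pairing `n` with `-n` gives the expansion.
-/

open MeasureTheory Set

theorem Continuous.memLp_restrict_Ioc {E : Type*} [NormedAddCommGroup E] {f : ℝ → E}
    (hf : Continuous f) (p : ENNReal) (a b : ℝ) : MemLp f p (volume.restrict (Ioc a b)) := by
  obtain ⟨C, hC⟩ := isCompact_Icc.exists_bound_of_continuousOn (s := Icc a b) hf.continuousOn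
  exact MemLp.of_bound hf.aestronglyMeasurable C
    (ae_restrict_of_forall_mem measurableSet_Ioc fun x hx => hC x (Ioc_subset_Icc_self hx))

section FourierExp

open Complex

theorem fourierCoeffOn_exp_mul (c : ℂ) (n : ℤ) (hc : c ≠ 2 * π * I * n) :
    fourierCoeffOn zero_lt_one (fun x : ℝ => cexp (c * x)) n
      = (cexp c - 1) / (c - 2 * π * I * n) := by
  rw [fourierCoeffOn_eq_integral]
  simp only [sub_zero, div_one, one_smul, fourier_coe_apply, smul_eq_mul, ← Complex.exp_add]
  calc _ = ∫ x in (0:ℝ)..1, cexp ((c - 2 * π * I * n) * x) :=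
        intervalIntegral.integral_congr fun x _ => by push_cast; ring_nf
    _ = _ := by
      rw [integral_exp_mul_complex (sub_ne_zero.2 hc), ofReal_one, ofReal_zero, mul_one, mul_zero,
        Complex.exp_zero, Complex.exp_sub, mul_comm _ (n : ℂ), Complex.exp_int_mul_two_pi_mul_I,
        div_one]

theorem norm_sq_fourierCoeffOn_exp_mul (s : ℝ) (hs : s ≠ 0) (n : ℤ) :
    ‖fourierCoeffOn zero_lt_one (fun x : ℝ => cexp (s * x)) n‖ ^ 2
      = (rexp s - 1) ^ 2 / (s ^ 2 + 4 * π ^ 2 * n ^ 2) := by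
  have hsn : (s : ℂ) ≠ 2 * π * I * n := fun h => hs (by simpa using congrArg re h)
  rw [fourierCoeffOn_exp_mul _ n hsn, norm_div, div_pow, ← ofReal_exp, ← ofReal_one, ← ofReal_sub,
    norm_real, Real.norm_eq_abs, sq_abs, Complex.sq_norm, normSq_apply]
  congr 1
  simp
  ring

theorem integral_norm_sq_exp_mul (s : ℝ) (hs : s ≠ 0) :
    ∫ x in (0:ℝ)..1, ‖cexp (s * x)‖ ^ 2 = (rexp (2 * s) - 1) / (2 * s) := by
  have h : ∀ x : ℝ, ‖cexp (s * x)‖ ^ 2 = rexp (2 * s * x) := fun x => by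
    rw [← ofReal_mul, norm_exp_ofReal, ← Real.exp_nat_mul]; push_cast; ring_nf
  simp only [h]
  rw [intervalIntegral.integral_comp_mul_left Real.exp (mul_ne_zero two_ne_zero hs), integral_exp]
  simp [div_eq_inv_mul]

theorem hasSum_one_div_sq_add_four_pi_sq_mul_sq (s : ℝ) (hs : s ≠ 0) :
    HasSum (fun n : ℤ => 1 / (s ^ 2 + 4 * π ^ 2 * n ^ 2))
      ((rexp s + 1) / (2 * s * (rexp s - 1))) := by
  have parseval := hasSum_sq_fourierCoeffOn zero_lt_one
    ((by fun_prop : Continuous fun x : ℝ => cexp (s * x)).memLp_restrict_Ioc 2 0 1)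
  simp only [norm_sq_fourierCoeffOn_exp_mul s hs, integral_norm_sq_exp_mul s hs, sub_zero, inv_one,
    one_smul] at parseval
  have he : rexp s - 1 ≠ 0 := sub_ne_zero.2 (mt (Real.exp_eq_one_iff s).1 hs)
  have hvalue : (rexp s + 1) / (2 * s * (rexp s - 1))
      = (rexp (2 * s) - 1) / (2 * s) / (rexp s - 1) ^ 2 := by
    rw [two_mul s, Real.exp_add]
    field_simp
    ring
  rw [hvalue]
  refine (parseval.div_const ((rexp s - 1) ^ 2)).congr_fun fun n => ?_
  field_simp

end FourierExp

/-- For `s > 0`,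
`(1/2 − 1/s + 1/(eˢ−1))/s = 2 ∑_{k=1}^∞ 1/(s² + 4π²k²)`. -/
theorem binetF_series (s : ℝ) (hs : 0 < s) :
    (1 / 2 - 1 / s + 1 / (exp s - 1)) / s
      = 2 * ∑' k : ℕ, 1 / (s ^ 2 + 4 * π ^ 2 * ((k : ℝ) + 1) ^ 2) := by
  set g : ℤ → ℝ := fun n => 1 / (s ^ 2 + 4 * π ^ 2 * n ^ 2)
  have hsum : HasSum g ((exp s + 1) / (2 * s * (exp s - 1))) :=
    hasSum_one_div_sq_add_four_pi_sq_mul_sq s hs.ne'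
  have heven : g.Even := fun n => by simp [g]
  have hsplit : ∑' n, g n
      = 1 / s ^ 2 + 2 * ∑' k : ℕ, 1 / (s ^ 2 + 4 * π ^ 2 * ((k : ℝ) + 1) ^ 2) := by
    rw [tsum_int_eq_zero_add_two_mul_tsum_pnat heven hsum.summable,
      tsum_pnat_eq_tsum_succ (f := fun n : ℕ => g n)]
    simp [g]
  have he : exp s - 1 ≠ 0 := sub_ne_zero.2 (mt (exp_eq_one_iff s).1 hs.ne')
  calc (1 / 2 - 1 / s + 1 / (exp s - 1)) / s
      = (exp s + 1) / (2 * s * (exp s - 1)) - 1 / s ^ 2 := by field_simp; ring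
    _ = _ := by rw [← hsum.tsum_eq, hsplit]; ring
end
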